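/- arXiv:2403.04472 — 2 statements merged into one kernel-verified Lean document; each statement's English description precedes it below -/
import Mathlib

section
/- The common zero locus in ℂ² of the seven polynomials p1, p2, p3, p4, p5, p6, p7 defined in the context, i.e. the set {(a,b) ∈ ℂ × ℂ : pi(a,b) = 0 for all i = 1,…,7}, is exactly the following set of twenty points: {(0,0), (1,0), (0,1), (-2,0), (-3,0), (0,-1), (0,-2), (1,-2), (-1/2,0), (-3/2,0), (0,-1/3), (0,-2/3), (-3/2,1/2), (-1/2,-1/2), (1,-3/2), (1,-4/3), (1,-2/3), (2,-5/3), (2,-4/3), (3,-5/2)}. -/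
/- Polynomials (as functions on ℂ²) attached to the singular vector of `V^{-2}(G₂)`:
the Harish–Chandra projections of a spanning set of the zero-weight component of the
submodule of `U(G₂)` generated by the image of the singular vector in the Zhu algebra. -/

noncomputable def pG1 (h1 h2 : ℂ) : ℂ :=
  -24*(2*h1 + 3*h2 + 3)*(8*h1^5 + 60*h2*h1^4 + 36*h1^4 + 178*h2^2*h1^3 + 212*h2*h1^3 +
    24*h1^3 + 261*h2^3*h1^2 + 438*h2^2*h1^2 + 48*h2*h1^2 - 44*h1^2 + 189*h2^4*h1 +
    369*h2^3*h1 - 28*h2^2*h1 - 152*h2*h1 - 24*h1 + 54*h2^5 + 108*h2^4 - 42*h2^3 -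
    96*h2^2 - 24*h2)

noncomputable def pG2 (h1 h2 : ℂ) : ℂ :=
  2*(32*h1^6 + 294*h2*h1^5 + 192*h1^5 + 1081*h2^2*h1^4 + 1398*h2*h1^4 + 312*h1^4 +
    2070*h2^3*h1^3 + 3928*h2^2*h1^3 + 1542*h2*h1^3 - 32*h1^3 + 2223*h2^4*h1^2 +
    5346*h2^3*h1^2 + 2557*h2^2*h1^2 - 630*h2*h1^2 - 360*h1^2 + 1296*h2^5*h1 +
    3582*h2^4*h1 + 1656*h2^3*h1 - 1554*h2^2*h1 - 1164*h2*h1 - 144*h1 + 324*h2^6 +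
    972*h2^5 + 396*h2^4 - 828*h2^3 - 720*h2^2 - 144*h2)

noncomputable def pG3 (h1 h2 : ℂ) : ℂ :=
  -4*(16*h1^6 + 161*h2*h1^5 + 96*h1^5 + 634*h2^2*h1^4 + 763*h2*h1^4 + 156*h1^4 +
    1254*h2^3*h1^3 + 2260*h2^2*h1^3 + 865*h2*h1^3 - 16*h1^3 + 1332*h2^4*h1^2 +
    3123*h2^3*h1^2 + 1558*h2^2*h1^2 - 271*h2*h1^2 - 180*h1^2 + 729*h2^5*h1 +
    2016*h2^4*h1 + 1041*h2^3*h1 - 708*h2^2*h1 - 582*h2*h1 - 72*h1 + 162*h2^6 +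
    486*h2^5 + 198*h2^4 - 414*h2^3 - 360*h2^2 - 72*h2)

noncomputable def pG4 (h1 h2 : ℂ) : ℂ :=
  6*h1*h2*(h1 + h2 + 1)*(h1 + 2*h2 + 2)*(h1 + 3*h2 + 3)*(2*h1 + 3*h2)

noncomputable def pG5 (h1 h2 : ℂ) : ℂ :=
  2*h1*(h1 + 2*h2 + 2)*(32*h1^4 + 218*h2*h1^3 + 128*h1^3 + 555*h2^2*h1^2 + 614*h2*h1^2 +
    56*h1^2 + 612*h2^3*h1 + 882*h2^2*h1 - 10*h2*h1 - 144*h1 + 243*h2^4 + 360*h2^3 -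
    249*h2^2 - 390*h2 - 72)

noncomputable def pG6 (h1 h2 : ℂ) : ℂ :=
  -2*h1*(h1 + 2*h2 + 2)*(16*h1^4 + 109*h2*h1^3 + 64*h1^3 + 264*h2^2*h1^2 + 289*h2*h1^2 +
    28*h1^2 + 279*h2^3*h1 + 396*h2^2*h1 - 17*h2*h1 - 72*h1 + 108*h2^4 + 153*h2^3 -
    132*h2^2 - 189*h2 - 36)

noncomputable def pG7 (h1 h2 : ℂ) : ℂ :=
  -4*(h1 - 1)*h1*(h1 + 2*h2 + 2)*(h1 + 2*h2 + 3)*(16*h1^2 + 63*h2*h1 + 32*h1 + 63*h2^2 +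
    63*h2 + 12)

/-- The common zero locus in ℂ² of the seven polynomials `pG1, …, pG7` is exactly the
twenty points corresponding to the highest weights (in fundamental-weight coordinates
`a·ϖ₁ + b·ϖ₂`) of the irreducible `L_{-2}(G₂)`-modules from category 𝒪. -/
theorem zero_locus_G2 :
    {z : ℂ × ℂ | pG1 z.1 z.2 = 0 ∧ pG2 z.1 z.2 = 0 ∧ pG3 z.1 z.2 = 0 ∧ pG4 z.1 z.2 = 0 ∧
      pG5 z.1 z.2 = 0 ∧ pG6 z.1 z.2 = 0 ∧ pG7 z.1 z.2 = 0} =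
    ({(0, 0), (1, 0), (0, 1), (-2, 0), (-3, 0), (0, -1), (0, -2), (1, -2),
      (-1/2, 0), (-3/2, 0), (0, -1/3), (0, -2/3), (-3/2, 1/2), (-1/2, -1/2),
      (1, -3/2), (1, -4/3), (1, -2/3), (2, -5/3), (2, -4/3), (3, -5/2)} : Set (ℂ × ℂ)) := by
  ext ⟨a, b⟩
  simp only [Set.mem_setOf_eq, Set.mem_insert_iff, Set.mem_singleton_iff, Prod.mk.injEq]
  constructor
  · rintro ⟨e1, e2, e3, e4, e5, e6, e7⟩
    simp only [pG1, pG2, pG3, pG4, pG5, pG6, pG7] at e1 e2 e3 e4 e5 e6 e7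
    have h4 : a * (b * ((a + b + 1) * ((a + 2*b + 2) * ((a + 3*b + 3) * (2*a + 3*b))))) = 0 := by
      linear_combination (1/6 : ℂ) * e4
    simp only [mul_eq_zero] at h4
    rcases h4 with h | h | h | h | h | h
    · have hs : a = 0 := h
      subst hs
      have hg : (b - 0) * (b - (-2)) * (b - (-1)) * (b - (-2/3)) * (b - (-1/3)) * (b - 1) = 0 := by
        linear_combination (0) * e1 + ((1/648)) * e2
      simp only [mul_eq_zero, sub_eq_zero] at hg
      rcases hg with (((((rfl | rfl) | rfl) | rfl) | rfl) | rfl)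
      all_goals norm_num
    · have hs : b = 0 := h
      subst hs
      have hg : (a - 0) * (a - (-3)) * (a - (-2)) * (a - (-3/2)) * (a - (-1/2)) * (a - 1) = 0 := by
        linear_combination (0) * e1 + ((1/64)) * e2
      simp only [mul_eq_zero, sub_eq_zero] at hg
      rcases hg with (((((rfl | rfl) | rfl) | rfl) | rfl) | rfl)
      all_goals norm_num
    · have hs : a = -1 - b := by linear_combination h
      subst hs
      have hg : (b - (-2)) * (b - (-1)) * (b - (-1/2)) * (b - (1/2)) = 0 := by
        linear_combination (0) * e1 + ((1/128)) * e2
      simp only [mul_eq_zero, sub_eq_zero] at hg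
      rcases hg with (((rfl | rfl) | rfl) | rfl)
      all_goals norm_num
    · have hs : a = -2 - 2*b := by linear_combination h
      subst hs
      have hg : (b - 0) * (b - (-5/2)) * (b - (-3/2)) * (b - (-1)) = 0 := by
        linear_combination ((-1/768)) * e1 + (0) * e2
      simp only [mul_eq_zero, sub_eq_zero] at hg
      rcases hg with (((rfl | rfl) | rfl) | rfl)
      all_goals norm_num
    · have hs : a = -3 - 3*b := by linear_combination h
      subst hs
      have hg : (b - 0) * (b - (-5/3)) * (b - (-4/3)) * (b - (-1)) = 0 := by
        linear_combination (0) * e1 + ((-1/1296)) * e3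
      simp only [mul_eq_zero, sub_eq_zero] at hg
      rcases hg with (((rfl | rfl) | rfl) | rfl)
      all_goals norm_num
    · have hs : a = -(3/2)*b := by linear_combination (1/2 : ℂ) * h
      subst hs
      have hg : (b - 0) * (b - (-4/3)) * (b - (-2/3)) = 0 := by
        linear_combination ((-1/486) + (1/3888)*b) * e1 + ((-1/162)) * e2
      simp only [mul_eq_zero, sub_eq_zero] at hg
      rcases hg with ((rfl | rfl) | rfl)
      all_goals norm_num
  · rintro (⟨rfl, rfl⟩ | ⟨rfl, rfl⟩ | ⟨rfl, rfl⟩ | ⟨rfl, rfl⟩ | ⟨rfl, rfl⟩ | ⟨rfl, rfl⟩ | ⟨rfl, rfl⟩ | ⟨rfl, rfl⟩ | ⟨rfl, rfl⟩ | ⟨rfl, rfl⟩ | ⟨rfl, rfl⟩ | ⟨rfl, rfl⟩ | ⟨rfl, rfl⟩ | ⟨rfl, rfl⟩ | ⟨rfl, rfl⟩ | ⟨rfl, rfl⟩ | ⟨rfl, rfl⟩ | ⟨rfl, rfl⟩ | ⟨rfl, rfl⟩ | ⟨rfl, rfl⟩) <;>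
      refine ⟨?_, ?_, ?_, ?_, ?_, ?_, ?_⟩ <;> simp only [pG1, pG2, pG3, pG4, pG5, pG6, pG7] <;> ring
end

section
/- A pair (a,b) of nonnegative integers is a common zero of the seven polynomials p1, p2, p3, p4, p5, p6, p7 defined in the context (i.e. pi(a,b) = 0 for all i = 1,…,7) if and only if (a,b) ∈ {(0,0), (1,0), (0,1)}. -/
/-- A pair `(a, b)` of nonnegative integers is a common zero of the seven polynomials
`pG1, …, pG7` if and only if `(a, b) ∈ {(0,0), (1,0), (0,1)}` (these are the dominant
integral weights among the twenty solutions, i.e. the highest weights of the irreducible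
ordinary `L_{-2}(G₂)`-modules). -/
theorem nonneg_integral_zeros_G2 (a b : ℕ) :
    (pG1 a b = 0 ∧ pG2 a b = 0 ∧ pG3 a b = 0 ∧ pG4 a b = 0 ∧
      pG5 a b = 0 ∧ pG6 a b = 0 ∧ pG7 a b = 0) ↔
    ((a, b) = (0, 0) ∨ (a, b) = (1, 0) ∨ (a, b) = (0, 1)) := by
  constructor
  · rintro ⟨h1, h2, h3, h4, h5, h6, h7⟩
    have hN4 : ((6*a*b*(a+b+1)*(a+2*b+2)*(a+3*b+3)*(2*a+3*b) : ℕ) : ℂ)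
        = pG4 a b := by
      unfold pG4; push_cast; ring
    have h4n : 6*a*b*(a+b+1)*(a+2*b+2)*(a+3*b+3)*(2*a+3*b) = 0 :=
      Nat.cast_eq_zero.mp (hN4.trans h4)
    have hab : a = 0 ∨ b = 0 := by
      simp only [Nat.mul_eq_zero] at h4n
      omega
    rcases hab with rfl | rfl
    · -- a = 0 : use pG1 to pin down b
      rcases Nat.eq_zero_or_pos b with rfl | hb
      · left; rfl
      · obtain ⟨c, rfl⟩ : ∃ c, b = c + 1 := ⟨b - 1, by omega⟩
        have hN1 : ((432*(c+2)*(c+1)*c*(9*(c+1)^3+27*(c+1)^2+20*(c+1)+4) : ℕ) : ℂ)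
            = -pG1 ((0:ℕ):ℂ) (((c+1:ℕ)):ℂ) := by
          unfold pG1; push_cast; ring
        have h1n : 432*(c+2)*(c+1)*c*(9*(c+1)^3+27*(c+1)^2+20*(c+1)+4) = 0 := by
          have hz : ((432*(c+2)*(c+1)*c*(9*(c+1)^3+27*(c+1)^2+20*(c+1)+4) : ℕ) : ℂ) = 0 := by
            rw [hN1, h1]; ring
          exact_mod_cast hz
        have hpos : 0 < 9*(c+1)^3+27*(c+1)^2+20*(c+1)+4 := by positivity
        have hc : c = 0 := by
          simp only [Nat.mul_eq_zero] at h1n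
          rcases h1n with h | h
          · omega
          · exact absurd h hpos.ne'
        subst hc
        right; right; rfl
    · -- b = 0 : use pG7 to pin down a
      rcases Nat.eq_zero_or_pos a with rfl | ha
      · left; rfl
      · obtain ⟨c, rfl⟩ : ∃ c, a = c + 1 := ⟨a - 1, by omega⟩
        have hN7 : ((4*c*(c+1)*(c+3)*(c+4)*(16*(c+1)^2+32*(c+1)+12) : ℕ) : ℂ)
            = -pG7 (((c+1:ℕ)):ℂ) ((0:ℕ):ℂ) := by
          unfold pG7; push_cast; ring
        have h7n : 4*c*(c+1)*(c+3)*(c+4)*(16*(c+1)^2+32*(c+1)+12) = 0 := by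
          have hz : ((4*c*(c+1)*(c+3)*(c+4)*(16*(c+1)^2+32*(c+1)+12) : ℕ) : ℂ) = 0 := by
            rw [hN7, h7]; ring
          exact_mod_cast hz
        have hpos : 0 < 16*(c+1)^2+32*(c+1)+12 := by positivity
        have hc : c = 0 := by
          simp only [Nat.mul_eq_zero] at h7n
          rcases h7n with h | h
          · omega
          · exact absurd h hpos.ne'
        subst hc
        right; left; rfl
  · rintro (h | h | h) <;> rw [Prod.mk.injEq] at h <;> obtain ⟨rfl, rfl⟩ := h <;>
      refine ⟨?_, ?_, ?_, ?_, ?_, ?_, ?_⟩ <;>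
      simp only [pG1, pG2, pG3, pG4, pG5, pG6, pG7] <;> norm_num
end
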